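/- For typed terms of the minimal completion S*, substitution preserves the τ-height: if Γ, x:B ⊢ C : τ and Γ ⊢ N : B in λS*, then ℋ_τ(C[x\N]) = ℋ_τ(C). -/

import Mathlib

/-- Terms of a generic λ-calculus with sorts `S` and constants `C` (de Bruijn indices). -/
inductive Tm (S : Type) (C : Type) : Type
  | sort : S → Tm S C
  | const : C → Tm S C
  | var : Nat → Tm S C
  | app : Tm S C → Tm S C → Tm S C
  | lam : Tm S C → Tm S C → Tm S C
  | pi : Tm S C → Tm S C → Tm S C

namespace Tm
variable {S C : Type}

/-- Lifting of de Bruijn indices ≥ k by d. -/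
def lift (d k : Nat) : Tm S C → Tm S C
  | sort s => sort s
  | const c => const c
  | var i => if i < k then var i else var (i + d)
  | app m n => app (m.lift d k) (n.lift d k)
  | lam a m => lam (a.lift d k) (m.lift d (k+1))
  | pi a b => pi (a.lift d k) (b.lift d (k+1))

/-- Substitution of variable k by N. -/
def subst (k : Nat) (N : Tm S C) : Tm S C → Tm S C
  | sort s => sort s
  | const c => const c
  | var i => if i < k then var i else if i = k then N.lift k 0 else var (i-1)
  | app m n => app (subst k N m) (subst k N n)
  | lam a m => lam (subst k N a) (subst (k+1) N m)
  | pi a b => pi (subst k N a) (subst (k+1) N b)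

/-- Lifting a simultaneous substitution under a binder. -/
def upσ (σ : Nat → Tm S C) : Nat → Tm S C
  | 0 => var 0
  | i+1 => (σ i).lift 1 0

/-- Simultaneous substitution. -/
def msubst (σ : Nat → Tm S C) : Tm S C → Tm S C
  | sort s => sort s
  | const c => const c
  | var i => σ i
  | app m n => app (m.msubst σ) (n.msubst σ)
  | lam a m => lam (a.msubst σ) (m.msubst (upσ σ))
  | pi a b => pi (a.msubst σ) (b.msubst (upσ σ))

end Tm

/-- A rewrite rule [Δ] l ↝ r. -/
abbrev Rule (S C : Type) := List (Tm S C) × Tm S C × Tm S C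

/-- One-step βR-reduction (contextual closure of β together with rules of R). -/
inductive Step {S C : Type} (R : Rule S C → Prop) : Tm S C → Tm S C → Prop
  | beta {A M N} : Step R (.app (.lam A M) N) (Tm.subst 0 N M)
  | rew {Δ l r} (σ : Nat → Tm S C) : R (Δ, l, r) → Step R (l.msubst σ) (r.msubst σ)
  | appL {M M' N} : Step R M M' → Step R (.app M N) (.app M' N)
  | appR {M N N'} : Step R N N' → Step R (.app M N) (.app M N')
  | lamA {A A' M} : Step R A A' → Step R (.lam A M) (.lam A' M)
  | lamM {A M M'} : Step R M M' → Step R (.lam A M) (.lam A M')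
  | piA {A A' B} : Step R A A' → Step R (.pi A B) (.pi A' B)
  | piB {A B B'} : Step R B B' → Step R (.pi A B) (.pi A B')

/-- The empty rewrite system: pure β-reduction. -/
def NoRules {S C : Type} : Rule S C → Prop := fun _ => False

/-- Multistep reduction. -/
abbrev Red {S C : Type} (R : Rule S C → Prop) : Tm S C → Tm S C → Prop :=
  Relation.ReflTransGen (Step R)

/-- Conversion: smallest congruence containing the reduction. -/
abbrev Conv {S C : Type} (R : Rule S C → Prop) : Tm S C → Tm S C → Prop :=
  Relation.EqvGen (Step R)

/-- Pure β-reduction and conversion. -/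
abbrev BetaRed {S C : Type} : Tm S C → Tm S C → Prop := Red NoRules
abbrev BetaConv {S C : Type} : Tm S C → Tm S C → Prop := Conv NoRules

/-- Confluence of a relation. -/
def Confluent {X : Type} (r : X → X → Prop) : Prop :=
  ∀ a b c, Relation.ReflTransGen r a b → Relation.ReflTransGen r a c →
    ∃ d, Relation.ReflTransGen r b d ∧ Relation.ReflTransGen r c d

/-- A PTS specification: a set of sorts, axioms and rules. -/
structure Spec (S : Type) where
  sorts : Set S
  ax : S → S → Prop
  ru : S → S → S → Prop

/-- Functional specifications. -/
def Spec.Functional {S : Type} (sp : Spec S) : Prop :=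
  (∀ s₁ s₂ s₂', sp.ax s₁ s₂ → sp.ax s₁ s₂' → s₂ = s₂') ∧
  (∀ s₁ s₂ s₃ s₃', sp.ru s₁ s₂ s₃ → sp.ru s₁ s₂ s₃' → s₃ = s₃')

/-- Top-sorts: sorts with no axiom. -/
def Spec.TopSort {S : Type} (sp : Spec S) (s : S) : Prop :=
  s ∈ sp.sorts ∧ ¬ ∃ s', sp.ax s s'

mutual
/-- Well-formed contexts (generic typing, parametrized by a spec, a constant
signature with a validity predicate, and a rewrite system used in conversion). -/
inductive Wf {S C : Type} (sp : Spec S) (sig : C → Tm S C) (valid : C → Prop)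
    (R : Rule S C → Prop) : List (Tm S C) → Prop
  | nil : Wf sp sig valid R []
  | cons {Γ A s} : Typing sp sig valid R Γ A (.sort s) → Wf sp sig valid R (A :: Γ)

/-- Typing judgment Γ ⊢ M : A (conversion modulo βR). -/
inductive Typing {S C : Type} (sp : Spec S) (sig : C → Tm S C) (valid : C → Prop)
    (R : Rule S C → Prop) : List (Tm S C) → Tm S C → Tm S C → Prop
  | var {Γ i A} : Wf sp sig valid R Γ → Γ[i]? = some A →
      Typing sp sig valid R Γ (.var i) (A.lift (i+1) 0)
  | const {Γ c} : Wf sp sig valid R Γ → valid c →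
      Typing sp sig valid R Γ (.const c) (sig c)
  | sort {Γ s₁ s₂} : Wf sp sig valid R Γ → sp.ax s₁ s₂ →
      Typing sp sig valid R Γ (.sort s₁) (.sort s₂)
  | pi {Γ A B s₁ s₂ s₃} : Typing sp sig valid R Γ A (.sort s₁) →
      Typing sp sig valid R (A :: Γ) B (.sort s₂) → sp.ru s₁ s₂ s₃ →
      Typing sp sig valid R Γ (.pi A B) (.sort s₃)
  | lam {Γ A M B s} : Typing sp sig valid R (A :: Γ) M B →
      Typing sp sig valid R Γ (.pi A B) (.sort s) →
      Typing sp sig valid R Γ (.lam A M) (.pi A B)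
  | app {Γ M N A B} : Typing sp sig valid R Γ M (.pi A B) →
      Typing sp sig valid R Γ N A →
      Typing sp sig valid R Γ (.app M N) (Tm.subst 0 N B)
  | conv {Γ M A B s} : Typing sp sig valid R Γ M A →
      Typing sp sig valid R Γ B (.sort s) → Conv R A B →
      Typing sp sig valid R Γ M B
end

/-- Typing in a pure type system λS (no constants, no rewriting). -/
abbrev PTyping {S : Type} (sp : Spec S) :
    List (Tm S Empty) → Tm S Empty → Tm S Empty → Prop :=
  Typing sp (fun c => c.elim) (fun _ => False) NoRules

abbrev PWf {S : Type} (sp : Spec S) : List (Tm S Empty) → Prop :=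
  Wf sp (fun c => c.elim) (fun _ => False) NoRules

/-- The two sorts of the λΠ-calculus. -/
inductive LSort : Type
  | ty : LSort
  | kd : LSort

/-- The specification of the λΠ-calculus: Type : Kind, rules (Type,Type,Type),(Type,Kind,Kind). -/
def lpiSpec : Spec LSort where
  sorts := Set.univ
  ax s₁ s₂ := s₁ = .ty ∧ s₂ = .kd
  ru s₁ s₂ s₃ := s₁ = .ty ∧ ((s₂ = .ty ∧ s₃ = .ty) ∨ (s₂ = .kd ∧ s₃ = .kd))

/-- A rewrite rule is well-typed in the signature when both sides have a common type
in the plain λΠ-calculus (no rewriting) over that signature. -/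
def RuleWellTyped {C : Type} (sig : C → Tm LSort C) (valid : C → Prop)
    (ρ : Rule LSort C) : Prop :=
  ∃ A, Typing lpiSpec sig valid NoRules ρ.1 ρ.2.1 A ∧
       Typing lpiSpec sig valid NoRules ρ.1 ρ.2.2 A

/-- Well-formed signature: every constant's type is a λΠ type in the empty context. -/
def SigWellFormed {C : Type} (sig : C → Tm LSort C) (valid : C → Prop) : Prop :=
  ∀ c, valid c → ∃ s, Typing lpiSpec sig valid NoRules [] (sig c) (.sort s)

/-- Constants of the Cousineau–Dowek signature Σ_S. -/
inductive Const (S : Type) : Type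
  | u : S → Const S
  | eps : S → Const S
  | dot : S → S → Const S
  | pidot : S → S → S → Const S

/-- Types of the constants of Σ_S. -/
def sigS {S : Type} : Const S → Tm LSort (Const S)
  | .u _ => .sort .ty
  | .eps s => .pi (.const (.u s)) (.sort .ty)
  | .dot _ s₂ => .const (.u s₂)
  | .pidot s₁ s₂ s₃ =>
      .pi (.const (.u s₁))
        (.pi (.pi (.app (.const (.eps s₁)) (.var 0)) (.const (.u s₂))) (.const (.u s₃)))

/-- Valid constants of Σ_S (u_s, ε_s for sorts; ṡ₁ : u_{s₂} for axioms; π̇ for rules). -/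
def validS {S : Type} (sp : Spec S) : Const S → Prop
  | .u s => s ∈ sp.sorts
  | .eps s => s ∈ sp.sorts
  | .dot s₁ s₂ => sp.ax s₁ s₂
  | .pidot s₁ s₂ s₃ => sp.ru s₁ s₂ s₃

/-- The rewrite system R_S: ε_{s₂} ṡ₁ ↝ u_{s₁} and
ε_{s₃}(π̇_{s₁s₂s₃} A B) ↝ Πx:(ε_{s₁}A). ε_{s₂}(B x). -/
inductive RS {S : Type} (sp : Spec S) : Rule LSort (Const S) → Prop
  | axRule {s₁ s₂} : sp.ax s₁ s₂ →
      RS sp ([], .app (.const (.eps s₂)) (.const (.dot s₁ s₂)), .const (.u s₁))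
  | piRule {s₁ s₂ s₃} : sp.ru s₁ s₂ s₃ →
      RS sp ([.pi (.app (.const (.eps s₁)) (.var 0)) (.const (.u s₂)), .const (.u s₁)],
             .app (.const (.eps s₃)) (.app (.app (.const (.pidot s₁ s₂ s₃)) (.var 1)) (.var 0)),
             .pi (.app (.const (.eps s₁)) (.var 1)) (.app (.const (.eps s₂)) (.app (.var 1) (.var 0))))

/-- Typing in λΠ/S. -/
abbrev LTyping {S : Type} (sp : Spec S) :
    List (Tm LSort (Const S)) → Tm LSort (Const S) → Tm LSort (Const S) → Prop :=
  Typing lpiSpec sigS (validS sp) (RS sp)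

abbrev LWf {S : Type} (sp : Spec S) : List (Tm LSort (Const S)) → Prop :=
  Wf lpiSpec sigS (validS sp) (RS sp)

mutual
/-- Forward translation of terms: |M|_Γ = M'. -/
inductive TrT {S : Type} (sp : Spec S) :
    List (Tm S Empty) → Tm S Empty → Tm LSort (Const S) → Prop
  | sort {Γ s s'} : sp.ax s s' → TrT sp Γ (.sort s) (.const (.dot s s'))
  | var {Γ i} : TrT sp Γ (.var i) (.var i)
  | app {Γ M M' N N'} : TrT sp Γ M M' → TrT sp Γ N N' →
      TrT sp Γ (.app M N) (.app M' N')
  | lam {Γ A A' M M'} : TrTy sp Γ A A' → TrT sp (A :: Γ) M M' →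
      TrT sp Γ (.lam A M) (.lam A' M')
  | pi {Γ A B s₁ s₂ s₃ A' A'' B'} : PTyping sp Γ A (.sort s₁) →
      PTyping sp (A :: Γ) B (.sort s₂) → sp.ru s₁ s₂ s₃ →
      TrT sp Γ A A' → TrTy sp Γ A A'' → TrT sp (A :: Γ) B B' →
      TrT sp Γ (.pi A B) (.app (.app (.const (.pidot s₁ s₂ s₃)) A') (.lam A'' B'))

/-- Forward translation of types: ‖A‖_Γ = A'. -/
inductive TrTy {S : Type} (sp : Spec S) :
    List (Tm S Empty) → Tm S Empty → Tm LSort (Const S) → Prop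
  | sort {Γ s} : TrTy sp Γ (.sort s) (.const (.u s))
  | pi {Γ A A' B B'} : TrTy sp Γ A A' → TrTy sp (A :: Γ) B B' →
      TrTy sp Γ (.pi A B) (.pi A' B')
  | el {Γ A s A'} : PTyping sp Γ A (.sort s) → TrT sp Γ A A' →
      TrTy sp Γ A (.app (.const (.eps s)) A')
end

/-- Forward translation of contexts ‖Γ‖. -/
inductive TrCtx {S : Type} (sp : Spec S) :
    List (Tm S Empty) → List (Tm LSort (Const S)) → Prop
  | nil : TrCtx sp [] []
  | cons {Γ Γ' A A'} : TrCtx sp Γ Γ' → TrTy sp Γ A A' → TrCtx sp (A :: Γ) (A' :: Γ')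

mutual
/-- Inverse translation of terms: φ(M) = M'. -/
inductive InvT {S : Type} : Tm LSort (Const S) → Tm S Empty → Prop
  | dot {s₁ s₂} : InvT (.const (.dot s₁ s₂)) (.sort s₁)
  | pidot {s₁ s₂ s₃} : InvT (.const (.pidot s₁ s₂ s₃))
      (.lam (.sort s₁) (.lam (.pi (.var 0) (.sort s₂))
        (.pi (.var 1) (.app (.var 1) (.var 0)))))
  | var {i} : InvT (.var i) (.var i)
  | app {M M' N N'} : InvT M M' → InvT N N' → InvT (.app M N) (.app M' N')
  | lam {A A' M M'} : InvTy A A' → InvT M M' → InvT (.lam A M) (.lam A' M')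

/-- Inverse translation of types: ψ(A) = A'. -/
inductive InvTy {S : Type} : Tm LSort (Const S) → Tm S Empty → Prop
  | u {s} : InvTy (.const (.u s)) (.sort s)
  | el {s M M'} : InvT M M' → InvTy (.app (.const (.eps s)) M) M'
  | pi {A A' B B'} : InvTy A A' → InvTy B B' → InvTy (.pi A B) (.pi A' B')
end

/-- Inverse translation of (object) contexts ψ(Γ). -/
inductive InvCtx {S : Type} : List (Tm LSort (Const S)) → List (Tm S Empty) → Prop
  | nil : InvCtx [] []
  | cons {Γ Γ' A A'} : InvCtx Γ Γ' → InvTy A A' → InvCtx (A :: Γ) (A' :: Γ')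

/-- The minimal completion S* of S: a fresh top-sort τ, axioms s:τ for the top-sorts
of S, and rules (s₁,s₂,τ) for all pairs having no rule. -/
def mc {S : Type} (sp : Spec S) (τ : S) : Spec S where
  sorts := insert τ sp.sorts
  ax s₁ s₂ := sp.ax s₁ s₂ ∨ (s₁ ∈ sp.sorts ∧ (¬ ∃ s, sp.ax s₁ s) ∧ s₂ = τ)
  ru s₁ s₂ s₃ := sp.ru s₁ s₂ s₃ ∨
      (s₁ ∈ insert τ sp.sorts ∧ s₂ ∈ insert τ sp.sorts ∧ (¬ ∃ s, sp.ru s₁ s₂ s) ∧ s₃ = τ)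

/-- S' is a completion of S. -/
def IsCompletion {S : Type} (sp sp' : Spec S) : Prop :=
  sp.sorts ⊆ sp'.sorts ∧
  (∀ s₁ s₂, sp.ax s₁ s₂ → sp'.ax s₁ s₂) ∧
  (∀ s₁ s₂ s₃, sp.ru s₁ s₂ s₃ → sp'.ru s₁ s₂ s₃) ∧
  (∀ s₁ ∈ sp.sorts, ∃ s₂, sp'.ax s₁ s₂) ∧
  (∀ s₁ ∈ sp'.sorts, ∀ s₂ ∈ sp'.sorts, ∃ s₃, sp'.ru s₁ s₂ s₃)

/-- Kind-level β-reduction in a λΠ-calculus modulo: contraction of a β-redex whose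
type has type Kind, under any context. -/
inductive KindStep {C : Type} (sig : C → Tm LSort C) (valid : C → Prop)
    (R : Rule LSort C → Prop) : List (Tm LSort C) → Tm LSort C → Tm LSort C → Prop
  | beta {Γ A M N T} :
      Typing lpiSpec sig valid R Γ (.app (.lam A M) N) T →
      Typing lpiSpec sig valid R Γ T (.sort .kd) →
      KindStep sig valid R Γ (.app (.lam A M) N) (Tm.subst 0 N M)
  | appL {Γ M M' N} : KindStep sig valid R Γ M M' →
      KindStep sig valid R Γ (.app M N) (.app M' N)
  | appR {Γ M N N'} : KindStep sig valid R Γ N N' →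
      KindStep sig valid R Γ (.app M N) (.app M N')
  | lamA {Γ A A' M} : KindStep sig valid R Γ A A' →
      KindStep sig valid R Γ (.lam A M) (.lam A' M)
  | lamM {Γ A M M'} : KindStep sig valid R (A :: Γ) M M' →
      KindStep sig valid R Γ (.lam A M) (.lam A M')
  | piA {Γ A A' B} : KindStep sig valid R Γ A A' →
      KindStep sig valid R Γ (.pi A B) (.pi A' B)
  | piB {Γ A B B'} : KindStep sig valid R (A :: Γ) B B' →
      KindStep sig valid R Γ (.pi A B) (.pi A B')

/-- A term with no Kind-level β-redexes (a λΠ⁻ term). -/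
def KindFree {C : Type} (sig : C → Tm LSort C) (valid : C → Prop)
    (R : Rule LSort C → Prop) (Γ : List (Tm LSort C)) (M : Tm LSort C) : Prop :=
  ∀ N, ¬ KindStep sig valid R Γ M N

/-- Object contexts of λΠ/S: every declared type has type Type. -/
def ObjCtx {S : Type} (sp : Spec S) (Γ : List (Tm LSort (Const S))) : Prop :=
  ∀ i A, Γ[i]? = some A → LTyping sp (Γ.drop (i+1)) A (.sort .ty)

/-- The τ-height measure ℋ_τ on Γ-types of λS*. -/
inductive Ht {S : Type} (sp : Spec S) (τ : S) :
    List (Tm S Empty) → Tm S Empty → Nat → Prop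
  | ntau {Γ A s} : PTyping (mc sp τ) Γ A (.sort s) → s ≠ τ → Ht sp τ Γ A 0
  | srt {Γ s'} : PTyping (mc sp τ) Γ (.sort s') (.sort τ) → Ht sp τ Γ (.sort s') 0
  | pi {Γ B C m n} : PTyping (mc sp τ) Γ (.pi B C) (.sort τ) →
      Ht sp τ Γ B m → Ht sp τ (B :: Γ) C n → Ht sp τ Γ (.pi B C) (max m n + 1)

/-- The reducibility predicate, stratified by the τ-height of the type. -/
def RedN {S : Type} (sp : Spec S) (τ : S) :
    Nat → List (Tm S Empty) → Tm S Empty → Tm S Empty → Prop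
  | n, Γ, M, A =>
    PWf sp Γ ∧ ∃ s, PTyping (mc sp τ) Γ M A ∧ PTyping (mc sp τ) Γ A (.sort s) ∧
      ((s ≠ τ ∨ ∃ s' ∈ sp.sorts, A = .sort s') →
        ∃ M' A', BetaRed M M' ∧ BetaRed A A' ∧ PTyping sp Γ M' A') ∧
      (s = τ → ∀ B C, A = .pi B C → ∀ N,
        (∀ m (hm : m < n), Ht sp τ Γ B m → RedN sp τ m Γ N B) →
        ∀ m (hm : m < n), Ht sp τ Γ (Tm.subst 0 N C) m →
          RedN sp τ m Γ (.app M N) (Tm.subst 0 N C))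
  termination_by n => n

/-- The reducibility predicate Γ ⊨_S M : A. -/
def Reducible {S : Type} (sp : Spec S) (τ : S)
    (Γ : List (Tm S Empty)) (M A : Tm S Empty) : Prop :=
  ∃ n, Ht sp τ Γ A n ∧ RedN sp τ n Γ M A

/-!
Substituting `N` for the variable `x : B` transports a height derivation for `C` in `Γ, x : B` to
one for `C[x\N]` in `Γ` with the same value, since every typing judgment it records survives
substitution (the substitution lemma of λS*) and sorts are closed terms. On the other hand, S* is
functional along with S, and in a functional specification the τ-height is determined by the type:
which clause applies depends only on the sort of the type, and sorts of types are unique. Uniqueness of types reduces to injectivity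
of sorts and products under β-conversion, i.e. to confluence of β, obtained from Takahashi's
complete development.
-/

namespace Tm
variable {S C : Type}

@[simp] lemma lift_zero (M : Tm S C) (k : Nat) : M.lift 0 k = M := by
  induction M generalizing k <;> simp [lift, *]

lemma lift_lift_of_le_of_le (M : Tm S C) {d d' k k' : Nat} (h₁ : k ≤ k') (h₂ : k' ≤ k + d) :
    (M.lift d k).lift d' k' = M.lift (d + d') k := by
  induction M generalizing k k' with
  | var i => simp only [lift]; split_ifs <;> simp only [lift] <;> split_ifs <;> grind
  | _ => simp (disch := omega) [lift, *]

lemma lift_lift_of_add_le (M : Tm S C) {d d' k k' : Nat} (h : k + d ≤ k') :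
    (M.lift d k).lift d' k' = (M.lift d' (k' - d)).lift d k := by
  induction M generalizing k k' with
  | var i => simp only [lift]; split_ifs <;> simp only [lift] <;> split_ifs <;> grind
  | _ => simp (disch := omega) [lift, *, Nat.sub_add_comm (show d ≤ k' by omega)]

lemma lift_subst (M N : Tm S C) {d j k : Nat} (h : k ≤ j) :
    (subst k N M).lift d j = subst k (N.lift d (j - k)) (M.lift d (j + 1)) := by
  induction M generalizing j k with
  | var i =>
    simp only [subst, lift]
    split_ifs <;> simp only [subst, lift] <;> split_ifs <;>
      first | grind | rw [lift_lift_of_add_le N (by omega)]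
  | _ => simp (disch := omega) [subst, lift, *]

lemma subst_lift_of_add_le (M N : Tm S C) {d c j : Nat} (h : c + d ≤ j) :
    subst j N (M.lift d c) = (subst (j - d) N M).lift d c := by
  induction M generalizing c j with
  | var i =>
    simp only [subst, lift]
    split_ifs <;> simp only [subst, lift] <;> split_ifs <;>
      first | grind | (rw [lift_lift_of_le_of_le N (by omega) (by omega)]; grind)
  | _ => simp (disch := omega) [subst, lift, *, Nat.sub_add_comm (show d ≤ j by omega)]

lemma subst_lift_of_le_of_lt (M N : Tm S C) {d c k : Nat} (h₁ : c ≤ k) (h₂ : k < c + d) :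
    subst k N (M.lift d c) = M.lift (d - 1) c := by
  induction M generalizing c k with
  | var i => simp only [lift]; split_ifs <;> simp only [subst] <;> split_ifs <;> grind
  | _ => simp (disch := omega) [subst, lift, *]

lemma subst_subst (M N N' : Tm S C) {j k : Nat} (h : k ≤ j) :
    subst j N (subst k N' M) = subst k (subst (j - k) N N') (subst (j + 1) N M) := by
  induction M generalizing j k with
  | var i =>
    simp only [subst]
    split_ifs <;> (try simp only [subst]) <;> (try split_ifs) <;>
      first
        | grind
        | rw [subst_lift_of_add_le N' N (by omega)]
        | rw [subst_lift_of_le_of_lt N _ (by omega) (by omega), Nat.add_sub_cancel]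
  | _ => simp (disch := omega) [subst, *]

end Tm

section Beta
variable {S C : Type}

lemma Step.lift {M M' : Tm S C} (h : Step NoRules M M') (d k : Nat) :
    Step NoRules (M.lift d k) (M'.lift d k) := by
  induction h generalizing k with
  | @beta A M N =>
    rw [Tm.lift, Tm.lift, Tm.lift_subst M N (Nat.zero_le k), Nat.sub_zero]
    exact .beta
  | rew _ hr => cases hr
  | appL _ ih => exact .appL (ih k)
  | appR _ ih => exact .appR (ih k)
  | lamA _ ih => exact .lamA (ih k)
  | lamM _ ih => exact .lamM (ih (k + 1))
  | piA _ ih => exact .piA (ih k)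
  | piB _ ih => exact .piB (ih (k + 1))

lemma Step.subst {M M' : Tm S C} (h : Step NoRules M M') (k : Nat) (N : Tm S C) :
    Step NoRules (Tm.subst k N M) (Tm.subst k N M') := by
  induction h generalizing k with
  | @beta A M N' =>
    rw [Tm.subst, Tm.subst, Tm.subst_subst M N N' (Nat.zero_le k), Nat.sub_zero]
    exact .beta
  | rew _ hr => cases hr
  | appL _ ih => exact .appL (ih k)
  | appR _ ih => exact .appR (ih k)
  | lamA _ ih => exact .lamA (ih k)
  | lamM _ ih => exact .lamM (ih (k + 1))
  | piA _ ih => exact .piA (ih k)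
  | piB _ ih => exact .piB (ih (k + 1))

lemma Conv.map {R : Rule S C → Prop} (f : Tm S C → Tm S C)
    (hf : ∀ a b, Step R a b → Step R (f a) (f b)) {a b : Tm S C} (h : Conv R a b) :
    Conv R (f a) (f b) := by
  induction h with
  | rel _ _ h => exact .rel _ _ (hf _ _ h)
  | refl => exact .refl _
  | symm _ _ _ ih => exact ih.symm
  | trans _ _ _ _ _ ih₁ ih₂ => exact ih₁.trans _ _ _ ih₂

inductive Par : Tm S C → Tm S C → Prop
  | sort (s : S) : Par (.sort s) (.sort s)
  | const (c : C) : Par (.const c) (.const c)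
  | var (i : Nat) : Par (.var i) (.var i)
  | app {M M' N N'} : Par M M' → Par N N' → Par (.app M N) (.app M' N')
  | lam {A A' M M'} : Par A A' → Par M M' → Par (.lam A M) (.lam A' M')
  | pi {A A' B B'} : Par A A' → Par B B' → Par (.pi A B) (.pi A' B')
  | beta {A M M' N N'} : Par M M' → Par N N' → Par (.app (.lam A M) N) (Tm.subst 0 N' M')

namespace Par

lemma refl : ∀ M : Tm S C, Par M M
  | .sort s => .sort s
  | .const c => .const c
  | .var i => .var i
  | .app M N => .app (refl M) (refl N)
  | .lam A M => .lam (refl A) (refl M)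
  | .pi A B => .pi (refl A) (refl B)

lemma of_step {M M' : Tm S C} (h : Step NoRules M M') : Par M M' := by
  induction h with
  | beta => exact .beta (refl _) (refl _)
  | rew _ hr => cases hr
  | appL _ ih => exact .app ih (refl _)
  | appR _ ih => exact .app (refl _) ih
  | lamA _ ih => exact .lam ih (refl _)
  | lamM _ ih => exact .lam (refl _) ih
  | piA _ ih => exact .pi ih (refl _)
  | piB _ ih => exact .pi (refl _) ih

lemma toConv {M M' : Tm S C} (h : Par M M') : Conv NoRules M M' := by
  induction h with
  | sort | const | var => exact .refl _
  | @app M M' N N' _ _ ih₁ ih₂ =>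
    exact (ih₁.map (.app · N) fun _ _ => .appL).trans _ _ _ (ih₂.map _ fun _ _ => .appR)
  | @lam A A' M M' _ _ ih₁ ih₂ =>
    exact (ih₁.map (.lam · M) fun _ _ => .lamA).trans _ _ _ (ih₂.map _ fun _ _ => .lamM)
  | @pi A A' B B' _ _ ih₁ ih₂ =>
    exact (ih₁.map (.pi · B) fun _ _ => .piA).trans _ _ _ (ih₂.map _ fun _ _ => .piB)
  | @beta A M M' N N' _ _ ih₁ ih₂ =>
    have hredex := (ih₁.map (.lam A ·) fun _ _ => .lamM).map (.app · N) fun _ _ => .appL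
    exact (hredex.trans _ _ _ (ih₂.map _ fun _ _ => .appR)).trans _ _ _ (.rel _ _ .beta)

lemma lift {M M' : Tm S C} (h : Par M M') (d k : Nat) : Par (M.lift d k) (M'.lift d k) := by
  induction h generalizing k with
  | sort s => exact .sort s
  | const c => exact .const c
  | var i => simp only [Tm.lift]; split_ifs <;> exact refl _
  | app _ _ ih₁ ih₂ => exact .app (ih₁ k) (ih₂ k)
  | lam _ _ ih₁ ih₂ => exact .lam (ih₁ k) (ih₂ (k + 1))
  | pi _ _ ih₁ ih₂ => exact .pi (ih₁ k) (ih₂ (k + 1))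
  | @beta A M M' N N' _ _ ih₁ ih₂ =>
    rw [Tm.lift, Tm.lift, Tm.lift_subst M' N' (Nat.zero_le k), Nat.sub_zero]
    exact .beta (ih₁ (k + 1)) (ih₂ k)

lemma subst {M M' N N' : Tm S C} (h : Par M M') (hN : Par N N') (k : Nat) :
    Par (Tm.subst k N M) (Tm.subst k N' M') := by
  induction h generalizing k with
  | sort s => exact .sort s
  | const c => exact .const c
  | var i => simp only [Tm.subst]; split_ifs <;> first | exact refl _ | exact hN.lift k 0
  | app _ _ ih₁ ih₂ => exact .app (ih₁ k) (ih₂ k)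
  | lam _ _ ih₁ ih₂ => exact .lam (ih₁ k) (ih₂ (k + 1))
  | pi _ _ ih₁ ih₂ => exact .pi (ih₁ k) (ih₂ (k + 1))
  | @beta A M M' N₁ N₁' _ _ ih₁ ih₂ =>
    rw [Tm.subst, Tm.subst, Tm.subst_subst M' N' N₁' (Nat.zero_le k), Nat.sub_zero]
    exact .beta (ih₁ (k + 1)) (ih₂ k)

end Par

def Tm.develop : Tm S C → Tm S C
  | .app (.lam _ M) N => Tm.subst 0 N.develop M.develop
  | .app M N => .app M.develop N.develop
  | .lam A M => .lam A.develop M.develop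
  | .pi A B => .pi A.develop B.develop
  | M => M

lemma Par.to_develop {M N : Tm S C} (h : Par M N) : Par N M.develop := by
  induction h with
  | sort s => exact .sort s
  | const c => exact .const c
  | var i => exact .var i
  | beta _ _ ih₁ ih₂ => exact ih₁.subst ih₂ 0
  | @app M M' N N' hM _ ihM ihN =>
    cases M with
    | lam A M₁ =>
      cases hM with
      | lam => cases ihM with
        | lam _ hM₁ => exact .beta hM₁ ihN
    | _ => exact .app ihM ihN
  | lam _ _ ih₁ ih₂ => exact .lam ih₁ ih₂
  | pi _ _ ih₁ ih₂ => exact .pi ih₁ ih₂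

lemma Par.join_of_conv {a b : Tm S C} (h : Conv NoRules a b) :
    Relation.Join (Relation.ReflTransGen Par) a b := by
  have hdiamond : ∀ a b c : Tm S C, Par a b → Par a c →
      ∃ d, Relation.ReflGen Par b d ∧ Relation.ReflTransGen Par c d :=
    fun a _ _ hb hc => ⟨a.develop, .single hb.to_develop, .single hc.to_develop⟩
  exact (Relation.equivalence_join_reflTransGen hdiamond).eqvGen_iff.mp
    (Relation.EqvGen.mono (fun _ _ hs => ⟨_, .single (Par.of_step hs), .refl⟩) _ _ h)

lemma Par.conv_of_reflTransGen {a b : Tm S C} (h : Relation.ReflTransGen Par a b) :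
    Conv NoRules a b :=
  Relation.reflTransGen_le_of_le (fun _ _ hp => hp.toConv) _ _ h

lemma Par.reflTransGen_sort_eq {s : S} {M : Tm S C} (h : Relation.ReflTransGen Par (.sort s) M) :
    M = .sort s := by
  induction h with
  | refl => rfl
  | tail _ hp ih => subst ih; cases hp; rfl

lemma Par.reflTransGen_pi_inv {A B M : Tm S C} (h : Relation.ReflTransGen Par (.pi A B) M) :
    ∃ A' B', M = .pi A' B' ∧
      Relation.ReflTransGen Par A A' ∧ Relation.ReflTransGen Par B B' := by
  induction h with
  | refl => exact ⟨A, B, rfl, .refl, .refl⟩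
  | tail _ hp ih =>
    obtain ⟨A', B', rfl, hA, hB⟩ := ih
    cases hp with
    | pi hA' hB' => exact ⟨_, _, rfl, hA.tail hA', hB.tail hB'⟩

lemma Conv.sort_inj {s s' : S} (h : Conv (NoRules (C := C)) (.sort s) (.sort s')) : s = s' := by
  obtain ⟨c, h₁, h₂⟩ := Par.join_of_conv h
  rw [Par.reflTransGen_sort_eq h₁] at h₂
  exact Tm.sort.inj (Par.reflTransGen_sort_eq h₂)

lemma Conv.pi_inj {A B A' B' : Tm S C} (h : Conv NoRules (.pi A B) (.pi A' B')) :
    Conv NoRules A A' ∧ Conv NoRules B B' := by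
  obtain ⟨c, h₁, h₂⟩ := Par.join_of_conv h
  obtain ⟨A₁, B₁, rfl, hA, hB⟩ := Par.reflTransGen_pi_inv h₁
  obtain ⟨A₂, B₂, he, hA', hB'⟩ := Par.reflTransGen_pi_inv h₂
  cases he
  exact ⟨(Par.conv_of_reflTransGen hA).trans _ _ _ (Par.conv_of_reflTransGen hA').symm,
    (Par.conv_of_reflTransGen hB).trans _ _ _ (Par.conv_of_reflTransGen hB').symm⟩

end Beta

namespace Typing
variable {S C : Type} {sp : Spec S} {sig : C → Tm S C} {valid : C → Prop}
  {R : Rule S C → Prop} {Γ : List (Tm S C)}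

lemma wf {M T : Tm S C} : Typing sp sig valid R Γ M T → Wf sp sig valid R Γ
  | .var hw _ | .const hw _ | .sort hw _ => hw
  | .pi h _ _ | .lam _ h | .app h _ | .conv h _ _ => h.wf

lemma sort_inv {M T : Tm S C} :
    Typing sp sig valid R Γ M T → ∀ {s}, M = .sort s →
      ∃ s₂, sp.ax s s₂ ∧ Conv R T (.sort s₂)
  | .sort _ ha, _, rfl => ⟨_, ha, .refl _⟩
  | .conv h _ hc, _, e =>
    let ⟨s₂, ha, c⟩ := sort_inv h e; ⟨s₂, ha, hc.symm.trans _ _ _ c⟩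
  | .var .., _, e | .const .., _, e | .pi .., _, e | .lam .., _, e | .app .., _, e => nomatch e

lemma var_inv {M T : Tm S C} :
    Typing sp sig valid R Γ M T → ∀ {i}, M = .var i →
      ∃ A, Γ[i]? = some A ∧ Conv R T (A.lift (i + 1) 0)
  | .var _ hi, _, rfl => ⟨_, hi, .refl _⟩
  | .conv h _ hc, _, e => let ⟨A, hi, c⟩ := var_inv h e; ⟨A, hi, hc.symm.trans _ _ _ c⟩
  | .sort .., _, e | .const .., _, e | .pi .., _, e | .lam .., _, e | .app .., _, e => nomatch e

lemma const_inv {M T : Tm S C} :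
    Typing sp sig valid R Γ M T → ∀ {c}, M = .const c → Conv R T (sig c)
  | .const .., _, rfl => .refl _
  | .conv h _ hc, _, e => hc.symm.trans _ _ _ (const_inv h e)
  | .sort .., _, e | .var .., _, e | .pi .., _, e | .lam .., _, e | .app .., _, e => nomatch e

lemma pi_inv {M T : Tm S C} :
    Typing sp sig valid R Γ M T → ∀ {A B}, M = .pi A B →
      ∃ s₁ s₂ s₃, Typing sp sig valid R Γ A (.sort s₁) ∧
        Typing sp sig valid R (A :: Γ) B (.sort s₂) ∧ sp.ru s₁ s₂ s₃ ∧
        Conv R T (.sort s₃)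
  | .pi hA hB hr, _, _, rfl => ⟨_, _, _, hA, hB, hr, .refl _⟩
  | .conv h _ hc, _, _, e =>
    let ⟨s₁, s₂, s₃, hA, hB, hr, c⟩ := pi_inv h e
    ⟨s₁, s₂, s₃, hA, hB, hr, hc.symm.trans _ _ _ c⟩
  | .sort .., _, _, e | .var .., _, _, e | .const .., _, _, e | .lam .., _, _, e
  | .app .., _, _, e => nomatch e

lemma lam_inv {M T : Tm S C} :
    Typing sp sig valid R Γ M T → ∀ {A M'}, M = .lam A M' →
      ∃ B, Typing sp sig valid R (A :: Γ) M' B ∧ Conv R T (.pi A B)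
  | .lam hM _, _, _, rfl => ⟨_, hM, .refl _⟩
  | .conv h _ hc, _, _, e => let ⟨B, hM, c⟩ := lam_inv h e; ⟨B, hM, hc.symm.trans _ _ _ c⟩
  | .sort .., _, _, e | .var .., _, _, e | .const .., _, _, e | .pi .., _, _, e
  | .app .., _, _, e => nomatch e

lemma app_inv {M T : Tm S C} :
    Typing sp sig valid R Γ M T → ∀ {M₁ M₂}, M = .app M₁ M₂ →
      ∃ A B, Typing sp sig valid R Γ M₁ (.pi A B) ∧ Typing sp sig valid R Γ M₂ A ∧
        Conv R T (Tm.subst 0 M₂ B)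
  | .app h₁ h₂, _, _, rfl => ⟨_, _, h₁, h₂, .refl _⟩
  | .conv h _ hc, _, _, e =>
    let ⟨A, B, h₁, h₂, c⟩ := app_inv h e
    ⟨A, B, h₁, h₂, hc.symm.trans _ _ _ c⟩
  | .sort .., _, _, e | .var .., _, _, e | .const .., _, _, e | .pi .., _, _, e
  | .lam .., _, _, e => nomatch e

theorem types_conv (hfun : sp.Functional) :
    ∀ {M : Tm S C} {Γ T T'}, Typing sp sig valid NoRules Γ M T →
      Typing sp sig valid NoRules Γ M T' → Conv NoRules T T'
  | .sort _, _, _, _, h, h' => by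
    obtain ⟨s₂, ha, hc⟩ := h.sort_inv rfl
    obtain ⟨s₂', ha', hc'⟩ := h'.sort_inv rfl
    cases hfun.1 _ _ _ ha ha'
    exact hc.trans _ _ _ hc'.symm
  | .const _, _, _, _, h, h' => (h.const_inv rfl).trans _ _ _ (h'.const_inv rfl).symm
  | .var _, _, _, _, h, h' => by
    obtain ⟨A, hi, hc⟩ := h.var_inv rfl
    obtain ⟨A', hi', hc'⟩ := h'.var_inv rfl
    cases hi.symm.trans hi'
    exact hc.trans _ _ _ hc'.symm
  | .app _ N, _, _, _, h, h' => by
    obtain ⟨_, B, hM, _, hc⟩ := h.app_inv rfl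
    obtain ⟨_, B', hM', _, hc'⟩ := h'.app_inv rfl
    have hB := (types_conv hfun hM hM').pi_inj.2
    exact (hc.trans _ _ _ (hB.map _ fun _ _ hs => hs.subst 0 N)).trans _ _ _ hc'.symm
  | .lam A _, _, _, _, h, h' => by
    obtain ⟨B, hM, hc⟩ := h.lam_inv rfl
    obtain ⟨B', hM', hc'⟩ := h'.lam_inv rfl
    have hB := types_conv hfun hM hM'
    exact (hc.trans _ _ _ (hB.map (.pi A ·) fun _ _ => .piB)).trans _ _ _ hc'.symm
  | .pi _ _, _, _, _, h, h' => by
    obtain ⟨s₁, s₂, s₃, hA, hB, hr, hc⟩ := h.pi_inv rfl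
    obtain ⟨s₁', s₂', s₃', hA', hB', hr', hc'⟩ := h'.pi_inv rfl
    cases (types_conv hfun hA hA').sort_inj
    cases (types_conv hfun hB hB').sort_inj
    cases hfun.2 _ _ _ _ hr hr'
    exact hc.trans _ _ _ hc'.symm

theorem sort_unique (hfun : sp.Functional) {M : Tm S C} {s s' : S}
    (h : Typing sp sig valid NoRules Γ M (.sort s))
    (h' : Typing sp sig valid NoRules Γ M (.sort s')) : s = s' :=
  (types_conv hfun h h').sort_inj

end Typing

section Context
variable {S C : Type}

def liftCtx : List (Tm S C) → List (Tm S C)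
  | [] => []
  | A :: Δ => A.lift 1 Δ.length :: liftCtx Δ

def substCtx (N : Tm S C) : List (Tm S C) → List (Tm S C)
  | [] => []
  | A :: Δ => Tm.subst Δ.length N A :: substCtx N Δ

@[simp] lemma length_liftCtx (Δ : List (Tm S C)) : (liftCtx Δ).length = Δ.length := by
  induction Δ <;> simp [liftCtx, *]

@[simp] lemma length_substCtx (N : Tm S C) (Δ : List (Tm S C)) :
    (substCtx N Δ).length = Δ.length := by
  induction Δ <;> simp [substCtx, *]

lemma getElem?_liftCtx {Δ : List (Tm S C)} {i : Nat} {A : Tm S C} (h : Δ[i]? = some A) :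
    (liftCtx Δ)[i]? = some (A.lift 1 (Δ.length - 1 - i)) := by
  induction Δ generalizing i with
  | nil => simp at h
  | cons D Δ ih =>
    cases i with
    | zero => cases h; simp [liftCtx]
    | succ i =>
      simp only [liftCtx, List.getElem?_cons_succ, List.length_cons] at h ⊢
      rw [ih h]
      congr 2
      omega

lemma getElem?_substCtx (N : Tm S C) {Δ : List (Tm S C)} {i : Nat} {A : Tm S C}
    (h : Δ[i]? = some A) :
    (substCtx N Δ)[i]? = some (Tm.subst (Δ.length - 1 - i) N A) := by
  induction Δ generalizing i with
  | nil => simp at h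
  | cons D Δ ih =>
    cases i with
    | zero => cases h; simp [substCtx]
    | succ i =>
      simp only [substCtx, List.getElem?_cons_succ, List.length_cons] at h ⊢
      rw [ih h]
      congr 2
      omega

end Context

section Weakening
variable {S : Type} {sp : Spec S} {Γ : List (Tm S Empty)} {A₀ : Tm S Empty} {s₀ : S}

lemma PTyping.var_liftCtx {Δ : List (Tm S Empty)} {i : Nat} {A : Tm S Empty}
    (hw : PWf sp (liftCtx Δ ++ A₀ :: Γ)) (hi : (Δ ++ Γ)[i]? = some A) :
    PTyping sp (liftCtx Δ ++ A₀ :: Γ)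
      ((Tm.var i).lift 1 Δ.length) ((A.lift (i + 1) 0).lift 1 Δ.length) := by
  by_cases hik : i < Δ.length
  · rw [List.getElem?_append_left hik] at hi
    have hlook : (liftCtx Δ ++ A₀ :: Γ)[i]? = some (A.lift 1 (Δ.length - 1 - i)) := by
      rw [List.getElem?_append_left (by simpa using hik)]
      exact getElem?_liftCtx hi
    rw [Tm.lift_lift_of_add_le A (by omega),
      show Δ.length - (i + 1) = Δ.length - 1 - i by omega]
    simpa [Tm.lift, hik] using Typing.var hw hlook
  · rw [List.getElem?_append_right (by omega)] at hi
    have hlook : (liftCtx Δ ++ A₀ :: Γ)[i + 1]? = some A := by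
      rw [List.getElem?_append_right (by simp; omega), length_liftCtx,
        show i + 1 - Δ.length = i - Δ.length + 1 by omega]
      simpa using hi
    rw [Tm.lift_lift_of_le_of_le A (by omega) (by omega)]
    simpa [Tm.lift, hik] using Typing.var hw hlook

mutual

theorem PTyping.weaken (hA : PTyping sp Γ A₀ (.sort s₀)) (Δ : List (Tm S Empty)) :
    ∀ {Γ' M T}, PTyping sp Γ' M T → Γ' = Δ ++ Γ →
      PTyping sp (liftCtx Δ ++ A₀ :: Γ) (M.lift 1 Δ.length) (T.lift 1 Δ.length)
  | _, _, _, .var hw hi, rfl => .var_liftCtx (PWf.weaken hA Δ hw rfl) hi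
  | _, _, _, .const _ hc, _ => hc.elim
  | _, _, _, .sort hw ha, rfl => .sort (PWf.weaken hA Δ hw rfl) ha
  | _, _, _, .pi h₁ h₂ hr, rfl =>
    .pi (PTyping.weaken hA Δ h₁ rfl) (PTyping.weaken hA (_ :: Δ) h₂ rfl) hr
  | _, _, _, .lam h₁ h₂, rfl =>
    .lam (PTyping.weaken hA (_ :: Δ) h₁ rfl) (PTyping.weaken hA Δ h₂ rfl)
  | _, _, _, .app (B := B) (N := N) h₁ h₂, rfl => by
    rw [Tm.lift, Tm.lift_subst B N (Nat.zero_le _), Nat.sub_zero]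
    exact .app (PTyping.weaken hA Δ h₁ rfl) (PTyping.weaken hA Δ h₂ rfl)
  | _, _, _, .conv h₁ h₂ hc, rfl =>
    .conv (PTyping.weaken hA Δ h₁ rfl) (PTyping.weaken hA Δ h₂ rfl)
      (hc.map _ fun _ _ hs => hs.lift 1 _)

theorem PWf.weaken (hA : PTyping sp Γ A₀ (.sort s₀)) :
    ∀ (Δ : List (Tm S Empty)) {Γ'}, PWf sp Γ' → Γ' = Δ ++ Γ →
      PWf sp (liftCtx Δ ++ A₀ :: Γ)
  | [], _, _, _ => .cons hA
  | _ :: Δ, _, .cons h, rfl => .cons (PTyping.weaken hA Δ h rfl)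

end

end Weakening

section Substitution
variable {S : Type} {sp : Spec S} {Γ : List (Tm S Empty)} {N B : Tm S Empty}

lemma PTyping.lift_append {Δ : List (Tm S Empty)} (hw : PWf sp (Δ ++ Γ))
    (hN : PTyping sp Γ N B) :
    PTyping sp (Δ ++ Γ) (N.lift Δ.length 0) (B.lift Δ.length 0) := by
  induction Δ with
  | nil => simpa using hN
  | cons A Δ ih =>
    obtain _ | ⟨hA⟩ := hw
    have h := PTyping.weaken hA [] (ih (Typing.wf hA)) rfl
    simp only [liftCtx, List.nil_append, List.length_nil] at h
    rwa [Tm.lift_lift_of_le_of_le N le_rfl (by omega),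
      Tm.lift_lift_of_le_of_le B le_rfl (by omega)] at h

lemma PTyping.var_substCtx {Δ : List (Tm S Empty)} {i : Nat} {A : Tm S Empty}
    (hw : PWf sp (substCtx N Δ ++ Γ)) (hN : PTyping sp Γ N B)
    (hi : (Δ ++ B :: Γ)[i]? = some A) :
    PTyping sp (substCtx N Δ ++ Γ)
      (Tm.subst Δ.length N (.var i)) (Tm.subst Δ.length N (A.lift (i + 1) 0)) := by
  rcases Nat.lt_trichotomy i Δ.length with hik | rfl | hik
  · rw [List.getElem?_append_left hik] at hi
    have hlook : (substCtx N Δ ++ Γ)[i]? = some (Tm.subst (Δ.length - 1 - i) N A) := by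
      rw [List.getElem?_append_left (by simpa using hik)]
      exact getElem?_substCtx N hi
    rw [Tm.subst_lift_of_add_le A N (by omega),
      show Δ.length - (i + 1) = Δ.length - 1 - i by omega]
    simpa [Tm.subst, hik] using Typing.var hw hlook
  · rw [List.getElem?_append_right le_rfl, Nat.sub_self] at hi
    cases hi
    rw [Tm.subst_lift_of_le_of_lt B N (by omega) (by omega)]
    simpa [Tm.subst] using hN.lift_append hw
  · rw [List.getElem?_append_right (by omega),
      show i - Δ.length = i - Δ.length - 1 + 1 by omega] at hi
    have hlook : (substCtx N Δ ++ Γ)[i - 1]? = some A := by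
      rw [List.getElem?_append_right (by simp; omega), length_substCtx,
        show i - 1 - Δ.length = i - Δ.length - 1 by omega]
      simpa using hi
    rw [Tm.subst_lift_of_le_of_lt A N (by omega) (by omega)]
    simpa [Tm.subst, hik.not_gt, hik.ne', Nat.sub_add_cancel (by omega : 1 ≤ i)] using
      Typing.var hw hlook

mutual

theorem PTyping.subst (hN : PTyping sp Γ N B) (Δ : List (Tm S Empty)) :
    ∀ {Γ' M T}, PTyping sp Γ' M T → Γ' = Δ ++ B :: Γ →
      PTyping sp (substCtx N Δ ++ Γ) (Tm.subst Δ.length N M) (Tm.subst Δ.length N T)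
  | _, _, _, .var hw hi, rfl => .var_substCtx (PWf.subst hN Δ hw rfl) hN hi
  | _, _, _, .const _ hc, _ => hc.elim
  | _, _, _, .sort hw ha, rfl => .sort (PWf.subst hN Δ hw rfl) ha
  | _, _, _, .pi h₁ h₂ hr, rfl =>
    .pi (PTyping.subst hN Δ h₁ rfl) (PTyping.subst hN (_ :: Δ) h₂ rfl) hr
  | _, _, _, .lam h₁ h₂, rfl =>
    .lam (PTyping.subst hN (_ :: Δ) h₁ rfl) (PTyping.subst hN Δ h₂ rfl)
  | _, _, _, .app (B := B') (N := N') h₁ h₂, rfl => by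
    rw [Tm.subst, Tm.subst_subst B' N N' (Nat.zero_le _), Nat.sub_zero]
    exact .app (PTyping.subst hN Δ h₁ rfl) (PTyping.subst hN Δ h₂ rfl)
  | _, _, _, .conv h₁ h₂ hc, rfl =>
    .conv (PTyping.subst hN Δ h₁ rfl) (PTyping.subst hN Δ h₂ rfl)
      (hc.map _ fun _ _ hs => hs.subst _ N)

theorem PWf.subst (hN : PTyping sp Γ N B) :
    ∀ (Δ : List (Tm S Empty)) {Γ'}, PWf sp Γ' → Γ' = Δ ++ B :: Γ →
      PWf sp (substCtx N Δ ++ Γ)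
  | [], _, _, _ => Typing.wf hN
  | _ :: Δ, _, .cons h, rfl => .cons (PTyping.subst hN Δ h rfl)

end

end Substitution

theorem Spec.Functional.mc {S : Type} {sp : Spec S} (hfun : sp.Functional) (τ : S) :
    (mc sp τ).Functional := by
  constructor
  · rintro s₁ s₂ s₂' (h | ⟨-, hn, rfl⟩) (h' | ⟨-, hn', rfl⟩)
    exacts [hfun.1 _ _ _ h h', (hn' ⟨_, h⟩).elim, (hn ⟨_, h'⟩).elim, rfl]
  · rintro s₁ s₂ s₃ s₃' (h | ⟨-, -, hn, rfl⟩) (h' | ⟨-, -, hn', rfl⟩)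
    exacts [hfun.2 _ _ _ _ h h', (hn' ⟨_, h⟩).elim, (hn ⟨_, h'⟩).elim, rfl]

namespace Ht
variable {S : Type} {sp : Spec S} {τ : S}

theorem subst {Γ : List (Tm S Empty)} {N B : Tm S Empty} (hN : PTyping (mc sp τ) Γ N B)
    {Γ' : List (Tm S Empty)} {C : Tm S Empty} {n : Nat} (h : Ht sp τ Γ' C n) :
    ∀ Δ, Γ' = Δ ++ B :: Γ → Ht sp τ (substCtx N Δ ++ Γ) (Tm.subst Δ.length N C) n := by
  induction h with
  | ntau hT hs => rintro Δ rfl; exact .ntau (hN.subst Δ hT rfl) hs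
  | srt hT => rintro Δ rfl; exact .srt (hN.subst Δ hT rfl)
  | pi hT _ _ ihB ihC =>
    rintro Δ rfl
    exact .pi (hN.subst Δ hT rfl) (ihB Δ rfl) (ihC (_ :: Δ) rfl)

theorem unique (hfun : sp.Functional) {Γ : List (Tm S Empty)} {A : Tm S Empty} {m n : Nat}
    (h : Ht sp τ Γ A m) (h' : Ht sp τ Γ A n) : m = n := by
  induction h generalizing n with
  | ntau hT hs =>
    cases h' with
    | ntau => rfl
    | srt hT' | pi hT' => exact (hs (Typing.sort_unique (hfun.mc τ) hT hT')).elim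
  | srt hT =>
    cases h' with
    | ntau hT' hs => exact (hs (Typing.sort_unique (hfun.mc τ) hT' hT)).elim
    | srt => rfl
  | pi hT _ _ ihB ihC =>
    cases h' with
    | ntau hT' hs => exact (hs (Typing.sort_unique (hfun.mc τ) hT' hT)).elim
    | pi _ hB' hC' => rw [ihB hB', ihC hC']

end Ht

/-- substitution preserves the τ-height:
ℋ_τ(C[x\N]) = ℋ_τ(C) for τ-typed C and typed N. -/
theorem height_subst_invariant {S : Type} (sp : Spec S) (hfun : sp.Functional)
    (τ : S) (hτ : τ ∉ sp.sorts) {Γ : List (Tm S Empty)} {B C N : Tm S Empty}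
    {n m : Nat}
    (hC : PTyping (mc sp τ) (B :: Γ) C (.sort τ))
    (hN : PTyping (mc sp τ) Γ N B)
    (h1 : Ht sp τ (B :: Γ) C n) (h2 : Ht sp τ Γ (Tm.subst 0 N C) m) :
    m = n :=
  h2.unique hfun (h1.subst hN [] rfl)
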